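/- arXiv:2605.00425 — 2 statements merged into one kernel-verified Lean document; each statement's English description precedes it below -/
import Mathlib

section
/- Entropy drift identity: for the surrogate objective ℓ_a(π) = A·log π_a (fixed action a, scalar A), the Fisher–Rao inner product of the natural gradients of the entropy H(π) and of ℓ_a equals A·(S_a - H(π)), where S_a = -log π_a. In particular, the entropy increases along the natural-gradient update direction of ℓ_a if and only if A·(S_a - H(π)) > 0. -/
/-! Testing the Fisher–Rao representation of `Adv · log π_a` against the tangent vector
`π (φ - 𝔼_π φ)` shows that its natural gradient pairs with any `φ` to `Adv (φ_a - 𝔼_π φ)`.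
The drift is the entropy differential evaluated on that gradient, i.e. the pairing with
`φ = -log π`, which gives `Adv (S_a - H(π))`. -/

open Finset

section

variable {A : Type*} [Fintype A]

theorem hasFDerivAt_entropy {p : A → ℝ} (hp : ∀ b, p b ≠ 0) :
    HasFDerivAt (fun q : A → ℝ => -∑ b, q b * Real.log (q b))
      (-∑ b, (Real.log (p b) + 1) • (ContinuousLinearMap.proj b : (A → ℝ) →L[ℝ] ℝ)) p :=
  (HasFDerivAt.fun_sum fun b _ =>
    (Real.hasDerivAt_mul_log (hp b)).comp_hasFDerivAt p
      (ContinuousLinearMap.proj b : (A → ℝ) →L[ℝ] ℝ).hasFDerivAt).neg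

theorem fderiv_entropy_apply_of_sum_eq_zero {p : A → ℝ} (hp : ∀ b, p b ≠ 0) {ξ : A → ℝ}
    (hξ : ∑ b, ξ b = 0) :
    fderiv ℝ (fun q : A → ℝ => -∑ b, q b * Real.log (q b)) p ξ
      = -∑ b, ξ b * Real.log (p b) := by
  rw [(hasFDerivAt_entropy hp).fderiv]
  simp only [neg_apply, _root_.sum_apply, smul_apply, ContinuousLinearMap.proj_apply, smul_eq_mul,
    add_mul, one_mul, sum_add_distrib, hξ, add_zero, mul_comm (Real.log _)]

theorem fderiv_const_mul_log_apply {p : A → ℝ} {a : A} (hp : p a ≠ 0) (c : ℝ)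
    (ξ : A → ℝ) :
    fderiv ℝ (fun q : A → ℝ => c * Real.log (q a)) p ξ = c * (ξ a / p a) := by
  have hlog : HasFDerivAt (fun q : A → ℝ => Real.log (q a))
      ((p a)⁻¹ • (ContinuousLinearMap.proj a : (A → ℝ) →L[ℝ] ℝ)) p :=
    (Real.hasDerivAt_log hp).comp_hasFDerivAt (f := fun q : A → ℝ => q a) p
      (ContinuousLinearMap.proj a : (A → ℝ) →L[ℝ] ℝ).hasFDerivAt
  rw [(hlog.const_mul c).fderiv]
  simp [div_eq_inv_mul]

theorem sum_mul_eq_of_fisherRao_grad_log {p g : A → ℝ} {a : A} {c : ℝ}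
    (hp : ∀ b, p b ≠ 0) (hp_sum : ∑ b, p b = 1) (hg : ∑ b, g b = 0)
    (hrep : ∀ ξ : A → ℝ, ∑ b, ξ b = 0 → ∑ b, g b * ξ b / p b = c * (ξ a / p a))
    (φ : A → ℝ) :
    ∑ b, g b * φ b = c * (φ a - ∑ b, p b * φ b) := by
  set E := ∑ b, p b * φ b
  have hξ : ∑ b, p b * (φ b - E) = 0 := by
    simp only [mul_sub, sum_sub_distrib, ← sum_mul, hp_sum, one_mul, E, sub_self]
  have h := hrep (fun b => p b * (φ b - E)) hξ
  have hcancel : ∀ b, g b * (p b * (φ b - E)) / p b = g b * φ b - E * g b := fun b => by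
    field_simp [hp b]
  simp only [hcancel, sum_sub_distrib, ← mul_sum, hg, mul_zero, sub_zero] at h
  rw [h, mul_div_cancel_left₀ _ (hp a)]

end

theorem stmt_6_general {A : Type*} [Fintype A] (π : A → ℝ)
    (hpos : ∀ b, 0 < π b) (hsum : ∑ b : A, π b = 1)
    (a : A) (Adv : ℝ) (gradH gradL : A → ℝ)
    (hHrep : ∀ ξ : A → ℝ, (∑ b : A, ξ b) = 0 →
      ∑ b : A, gradH b * ξ b / π b
        = fderiv ℝ (fun q : A → ℝ => -∑ b : A, q b * Real.log (q b)) π ξ)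
    (hLtan : ∑ b : A, gradL b = 0)
    (hLrep : ∀ ξ : A → ℝ, (∑ b : A, ξ b) = 0 →
      ∑ b : A, gradL b * ξ b / π b
        = fderiv ℝ (fun q : A → ℝ => Adv * Real.log (q a)) π ξ) :
    (∑ b : A, gradH b * gradL b / π b
        = Adv * ((-Real.log (π a)) - (-∑ b : A, π b * Real.log (π b)))) ∧
      (0 < fderiv ℝ (fun q : A → ℝ => -∑ b : A, q b * Real.log (q b)) π gradL ↔
        0 < Adv * ((-Real.log (π a)) - (-∑ b : A, π b * Real.log (π b)))) := by
  have hne : ∀ b, π b ≠ 0 := fun b => (hpos b).ne'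
  have hpair := sum_mul_eq_of_fisherRao_grad_log hne hsum hLtan
    (fun ξ hξ => (hLrep ξ hξ).trans (fderiv_const_mul_log_apply (hne a) Adv ξ))
    (fun b => Real.log (π b))
  have hdrift : ∑ b, gradH b * gradL b / π b
      = Adv * ((-Real.log (π a)) - (-∑ b, π b * Real.log (π b))) := by
    rw [hHrep gradL hLtan, fderiv_entropy_apply_of_sum_eq_zero hne hLtan, hpair]
    ring
  refine ⟨hdrift, ?_⟩
  rw [← hHrep gradL hLtan, hdrift]

/-- Entropy drift identity: for `ℓ_a(π) = A·log π_a`, the Fisher–Rao inner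
product of the natural gradients of the entropy and of `ℓ_a` equals `A·(S_a - H(π))`,
with `S_a = -log π_a`; in particular the entropy increases along the natural-gradient
direction of `ℓ_a` iff `A·(S_a - H(π)) > 0`. The natural gradients are characterized by
tangency and representation of the differential in the Fisher–Rao metric. -/
theorem stmt_6 {A : Type*} [Fintype A] (π : A → ℝ)
    (hpos : ∀ b, 0 < π b) (hsum : ∑ b : A, π b = 1)
    (a : A) (Adv : ℝ) (gradH gradL : A → ℝ)
    (hHtan : ∑ b : A, gradH b = 0)
    (hHrep : ∀ ξ : A → ℝ, (∑ b : A, ξ b) = 0 →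
      ∑ b : A, gradH b * ξ b / π b
        = fderiv ℝ (fun q : A → ℝ => -∑ b : A, q b * Real.log (q b)) π ξ)
    (hLtan : ∑ b : A, gradL b = 0)
    (hLrep : ∀ ξ : A → ℝ, (∑ b : A, ξ b) = 0 →
      ∑ b : A, gradL b * ξ b / π b
        = fderiv ℝ (fun q : A → ℝ => Adv * Real.log (q a)) π ξ) :
    (∑ b : A, gradH b * gradL b / π b
        = Adv * ((-Real.log (π a)) - (-∑ b : A, π b * Real.log (π b)))) ∧
      (0 < fderiv ℝ (fun q : A → ℝ => -∑ b : A, q b * Real.log (q b)) π gradL ↔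
        0 < Adv * ((-Real.log (π a)) - (-∑ b : A, π b * Real.log (π b)))) :=
  stmt_6_general π hpos hsum a Adv gradH gradL hHrep hLtan hLrep
end

section
/- Regularized entropy drift decomposition: for the objective ℓ_a(π) = A·log π_a + β·ψ(H(π)) - γ·D_KL(π∥ρ), the Fisher–Rao inner product of grad^F H and grad^F ℓ_a equals A·(S_a - H) + (β·ψ'(H) + γ)·Var_{b~π}(S_b) - γ·Cov_{b~π}(S_b, S_b^ref), where S_b = -log π_b, S_b^ref = -log ρ_b, H = H(π), Var_{b~π}(S) = Σ_b π_b (S_b - H)², and Cov_{b~π}(S, S^ref) = Σ_b π_b (S_b - H)(S_b^ref - Σ_c π_c S_c^ref). -/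
/-!
Since `grad^F H` is tangent to the simplex, the defining identity of `grad^F ℓ_a` turns the
Fisher–Rao inner product into the directional derivative `dℓ_a(π)[grad^F H]`. Testing the
defining identity of `grad^F H` against `e_b - π` gives `grad^F H = π ⊙ (S - H)`, and against
this centred vector `∑ f_b (grad^F H)_b = Cov_π(S, f)` for every `f`. On tangent vectors the
differential of `H` is `ξ ↦ ∑ S_b ξ_b` and that of `D_KL(· ∥ ρ)` is `ξ ↦ ∑ (S^ref_b - S_b) ξ_b`,
so the three terms of `ℓ_a` contribute `A (S_a - H)`, `β ψ'(H) Var_π(S)` and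
`-γ (Cov_π(S, S^ref) - Var_π(S))`.
-/

open Finset ContinuousLinearMap
open Real (log log_div hasDerivAt_log hasDerivAt_mul_log)

section

variable {ι : Type*} [Fintype ι]

theorem mul_log_div_eq_mul_log_sub (x : ℝ) {y : ℝ} (hy : y ≠ 0) :
    x * log (x / y) = x * log x - x * log y := by
  rcases eq_or_ne x 0 with rfl | hx
  · simp
  · rw [log_div hx hy, mul_sub]

theorem sum_smul_proj_apply (c ξ : ι → ℝ) :
    (∑ i, c i • proj i : (ι → ℝ) →L[ℝ] ℝ) ξ = ∑ i, c i * ξ i := by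
  simp

theorem hasFDerivAt_sum_mul_log {p : ι → ℝ} (hp : ∀ i, p i ≠ 0) :
    HasFDerivAt (fun q : ι → ℝ => ∑ i, q i * log (q i))
      (∑ i, (log (p i) + 1) • proj i : (ι → ℝ) →L[ℝ] ℝ) p :=
  HasFDerivAt.fun_sum fun i _ =>
    (hasDerivAt_mul_log (hp i)).comp_hasFDerivAt (f := fun q : ι → ℝ => q i) p
      (hasFDerivAt_apply i p)

theorem hasFDerivAt_entropy_s9 {p : ι → ℝ} (hp : ∀ i, p i ≠ 0) :
    HasFDerivAt (fun q : ι → ℝ => -∑ i, q i * log (q i))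
      (∑ i, (-log (p i) - 1) • proj i : (ι → ℝ) →L[ℝ] ℝ) p :=
  (hasFDerivAt_sum_mul_log hp).neg.congr_fderiv <| by
    simp only [← sum_neg_distrib, ← neg_smul, neg_add, sub_eq_add_neg]

theorem hasFDerivAt_sum_mul_log_div {p ρ : ι → ℝ} (hp : ∀ i, p i ≠ 0) (hρ : ∀ i, ρ i ≠ 0) :
    HasFDerivAt (fun q : ι → ℝ => ∑ i, q i * log (q i / ρ i))
      (∑ i, (log (p i) - log (ρ i) + 1) • proj i : (ι → ℝ) →L[ℝ] ℝ) p := by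
  refine HasFDerivAt.fun_sum fun i _ => ?_
  have hdiv : HasDerivAt (fun x => x * log (x / ρ i)) (log (p i) - log (ρ i) + 1) (p i) := by
    simp only [mul_log_div_eq_mul_log_sub _ (hρ i)]
    exact ((hasDerivAt_mul_log (hp i)).sub (hasDerivAt_mul_const _)).congr_deriv (by ring)
  exact hdiv.comp_hasFDerivAt p (hasFDerivAt_apply (𝕜 := ℝ) i p)

def IsFisherRaoGrad (π : ι → ℝ) (f : (ι → ℝ) → ℝ) (g : ι → ℝ) : Prop :=
  ∑ i, g i = 0 ∧ ∀ ξ : ι → ℝ, ∑ i, ξ i = 0 → ∑ i, g i * ξ i / π i = fderiv ℝ f π ξ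

theorem IsFisherRaoGrad.eq_mul_sub_sum_mul {π c g : ι → ℝ} {f : (ι → ℝ) → ℝ}
    (hπ : ∀ i, π i ≠ 0) (hπsum : ∑ i, π i = 1)
    (hf : HasFDerivAt f (∑ j, c j • proj j : (ι → ℝ) →L[ℝ] ℝ) π)
    (hg : IsFisherRaoGrad π f g) (i : ι) :
    g i = π i * (c i - ∑ j, π j * c j) := by
  classical
  set ξ : ι → ℝ := Pi.single i 1 - π
  have htan : ∑ j, ξ j = 0 := by simp [ξ, hπsum]
  have hrep := hg.2 ξ htan
  have hlhs : ∑ j, g j * ξ j / π j = g i / π i := by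
    simp [ξ, mul_sub, sub_div, mul_div_cancel_right₀ _ (hπ _), hg.1, Pi.single_apply, ite_div]
  have hrhs : ∑ j, c j * ξ j = c i - ∑ j, π j * c j := by
    simp [ξ, mul_sub, sum_sub_distrib, Pi.single_apply, mul_comm]
  rw [hf.fderiv, sum_smul_proj_apply, hlhs, hrhs, div_eq_iff (hπ i)] at hrep
  rw [hrep, mul_comm]

theorem IsFisherRaoGrad.entropy_eq {π g : ι → ℝ} (hπ : ∀ i, π i ≠ 0) (hπsum : ∑ i, π i = 1)
    (hg : IsFisherRaoGrad π (fun q => -∑ i, q i * log (q i)) g) (i : ι) :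
    g i = π i * (-log (π i) - ∑ j, π j * -log (π j)) := by
  rw [hg.eq_mul_sub_sum_mul hπ hπsum (hasFDerivAt_entropy_s9 hπ) i]
  simp [mul_sub, sum_sub_distrib, hπsum]

theorem fderiv_regularizedObjective_apply {π ρ : ι → ℝ} (hπ : ∀ i, π i ≠ 0)
    (hρ : ∀ i, ρ i ≠ 0) (a : ι) (Adv β γ : ℝ) {ψ : ℝ → ℝ}
    (hψ : DifferentiableAt ℝ ψ (-∑ i, π i * log (π i))) {ξ : ι → ℝ} (hξ : ∑ i, ξ i = 0) :
    fderiv ℝ (fun q : ι → ℝ => Adv * log (q a) + β * ψ (-∑ i, q i * log (q i))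
        - γ * ∑ i, q i * log (q i / ρ i)) π ξ
      = Adv * (ξ a / π a) + β * deriv ψ (-∑ i, π i * log (π i)) * ∑ i, -log (π i) * ξ i
        - γ * ∑ i, (log (π i) - log (ρ i)) * ξ i := by
  have hlog := (hasDerivAt_log (hπ a)).comp_hasFDerivAt (f := fun q : ι → ℝ => q a) π
    (hasFDerivAt_apply (𝕜 := ℝ) a π)
  have hψH := hψ.hasDerivAt.comp_hasFDerivAt π (hasFDerivAt_entropy_s9 hπ)
  have hℓ : HasFDerivAt (fun q : ι → ℝ => Adv * log (q a) + β * ψ (-∑ i, q i * log (q i))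
      - γ * ∑ i, q i * log (q i / ρ i)) _ π := ((hlog.const_mul Adv).add (hψH.const_mul β)).sub
    ((hasFDerivAt_sum_mul_log_div hπ hρ).const_mul γ)
  rw [hℓ.fderiv]
  simp only [sub_apply, add_apply, smul_apply, proj_apply, smul_eq_mul, _root_.sum_apply, sub_mul,
    neg_mul, one_mul, sum_sub_distrib, sum_neg_distrib, hξ, sub_zero, mul_neg, add_mul,
    sum_add_distrib, add_zero, sub_left_inj]
  ring

theorem sum_mul_mul_sub_sum_mul {p f : ι → ℝ} (hp : ∑ i, p i = 1) (g : ι → ℝ) :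
    ∑ i, g i * (p i * (f i - ∑ j, p j * f j))
      = ∑ i, p i * (f i - ∑ j, p j * f j) * (g i - ∑ j, p j * g j) := by
  have hcentered : ∑ i, p i * (f i - ∑ j, p j * f j) = 0 := by
    simp [mul_sub, sum_sub_distrib, ← sum_mul, hp]
  simp only [mul_sub _ (g _), sum_sub_distrib, ← sum_mul, hcentered, zero_mul, sub_zero]
  exact sum_congr rfl fun i _ => mul_comm _ _

end

theorem stmt_9_general {A : Type*} [Fintype A] (π ρ : A → ℝ)
    (hπ : ∀ b, 0 < π b) (hρ : ∀ b, 0 < ρ b)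
    (hπsum : ∑ b : A, π b = 1)
    (a : A) (Adv β γ : ℝ) (ψ : ℝ → ℝ)
    (hψ : Differentiable ℝ ψ)
    (S Sref : A → ℝ) (H : ℝ)
    (hS : ∀ b, S b = -Real.log (π b)) (hSref : ∀ b, Sref b = -Real.log (ρ b))
    (hH : H = ∑ b : A, π b * S b)
    (gradH gradL : A → ℝ)
    (hHtan : ∑ b : A, gradH b = 0)
    (hHrep : ∀ ξ : A → ℝ, (∑ b : A, ξ b) = 0 →
      ∑ b : A, gradH b * ξ b / π b
        = fderiv ℝ (fun q : A → ℝ => -∑ b : A, q b * Real.log (q b)) π ξ)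
    (hLrep : ∀ ξ : A → ℝ, (∑ b : A, ξ b) = 0 →
      ∑ b : A, gradL b * ξ b / π b
        = fderiv ℝ (fun q : A → ℝ =>
            Adv * Real.log (q a) + β * ψ (-∑ b : A, q b * Real.log (q b))
              - γ * ∑ b : A, q b * Real.log (q b / ρ b)) π ξ) :
    ∑ b : A, gradH b * gradL b / π b
      = Adv * (S a - H)
        + (β * deriv ψ H + γ) * (∑ b : A, π b * (S b - H) ^ 2)
        - γ * (∑ b : A, π b * (S b - H) * (Sref b - ∑ c : A, π c * Sref c)) := by
  have hπ₀ : ∀ b, π b ≠ 0 := fun b => (hπ b).ne'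
  have hlogπ : ∀ b, log (π b) = -S b := fun b => by rw [hS, neg_neg]
  have hlogρ : ∀ b, log (ρ b) = -Sref b := fun b => by rw [hSref, neg_neg]
  have hentropy : -∑ b, π b * log (π b) = H := by simp [hlogπ, hH]
  have hgradH : ∀ b, gradH b = π b * (S b - H) := fun b => by
    simpa only [hlogπ, neg_neg, ← hH] using
      IsFisherRaoGrad.entropy_eq hπ₀ hπsum ⟨hHtan, hHrep⟩ b
  have hcov : ∀ f : A → ℝ, ∑ b, f b * gradH b
      = ∑ b, π b * (S b - H) * (f b - ∑ c, π c * f c) := fun f => by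
    simp only [hgradH, hH]
    exact sum_mul_mul_sub_sum_mul hπsum f
  have hvar : ∑ b, S b * gradH b = ∑ b, π b * (S b - H) ^ 2 := by
    simp only [hcov, ← hH, sq, mul_assoc]
  calc ∑ b, gradH b * gradL b / π b = ∑ b, gradL b * gradH b / π b := by simp only [mul_comm]
    _ = Adv * (gradH a / π a) + β * deriv ψ H * ∑ b, S b * gradH b
          - γ * ∑ b, (Sref b - S b) * gradH b := by
      rw [hLrep gradH hHtan, fderiv_regularizedObjective_apply hπ₀ (fun b => (hρ b).ne') a Adv β γ
        (hψ _) hHtan, hentropy]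
      simp only [hlogπ, hlogρ, neg_neg, neg_sub_neg]
    _ = _ := by
      rw [hgradH a, mul_div_cancel_left₀ _ (hπ₀ a)]
      simp only [sub_mul, sum_sub_distrib, hvar, hcov Sref]
      ring

/-- Regularized entropy drift decomposition: for
`ℓ_a(π) = A·log π_a + β·ψ(H(π)) - γ·D_KL(π∥ρ)`, the Fisher–Rao inner product of
`grad^F H` and `grad^F ℓ_a` equals
`A·(S_a - H) + (β·ψ'(H) + γ)·Var_{b~π}(S) - γ·Cov_{b~π}(S, S^ref)`. -/
theorem stmt_9 {A : Type*} [Fintype A] (π ρ : A → ℝ)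
    (hπ : ∀ b, 0 < π b) (hρ : ∀ b, 0 < ρ b)
    (hπsum : ∑ b : A, π b = 1) (hρsum : ∑ b : A, ρ b = 1)
    (a : A) (Adv β γ : ℝ) (ψ : ℝ → ℝ)
    (hψ : Differentiable ℝ ψ) (hψmono : Monotone ψ)
    (S Sref : A → ℝ) (H : ℝ)
    (hS : ∀ b, S b = -Real.log (π b)) (hSref : ∀ b, Sref b = -Real.log (ρ b))
    (hH : H = ∑ b : A, π b * S b)
    (gradH gradL : A → ℝ)
    (hHtan : ∑ b : A, gradH b = 0)
    (hHrep : ∀ ξ : A → ℝ, (∑ b : A, ξ b) = 0 →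
      ∑ b : A, gradH b * ξ b / π b
        = fderiv ℝ (fun q : A → ℝ => -∑ b : A, q b * Real.log (q b)) π ξ)
    (hLtan : ∑ b : A, gradL b = 0)
    (hLrep : ∀ ξ : A → ℝ, (∑ b : A, ξ b) = 0 →
      ∑ b : A, gradL b * ξ b / π b
        = fderiv ℝ (fun q : A → ℝ =>
            Adv * Real.log (q a) + β * ψ (-∑ b : A, q b * Real.log (q b))
              - γ * ∑ b : A, q b * Real.log (q b / ρ b)) π ξ) :
    ∑ b : A, gradH b * gradL b / π b
      = Adv * (S a - H)
        + (β * deriv ψ H + γ) * (∑ b : A, π b * (S b - H) ^ 2)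
        - γ * (∑ b : A, π b * (S b - H) * (Sref b - ∑ c : A, π c * Sref c)) :=
  stmt_9_general π ρ hπ hρ hπsum a Adv β γ ψ hψ S Sref H hS hSref hH gradH gradL hHtan hHrep hLrep
end
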